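/- If there is a constant C with ‖(I − P_n) A* Q_m‖ · ‖A_{n,m}†‖ ≤ C for all n, m, then there is C' with ‖(I − P_n) A* Q_m A P_n x‖ ≤ C' ‖P_n A* Q_m A P_n x‖ for all n, m and x ∈ X, and consequently sup_{n,m} ‖A_{n,m}† A‖ < ∞. -/

import Mathlib

open ContinuousLinearMap Filter Topology

noncomputable section

/-- Orthogonal projection onto a subspace, as an endomorphism. -/
noncomputable def proj {E : Type*} [NormedAddCommGroup E] [InnerProductSpace ℝ E]
    (K : Submodule ℝ E) [K.HasOrthogonalProjection] : E →L[ℝ] E :=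
  K.subtypeL.comp (K.orthogonalProjectionOnto : E →L[ℝ] K)

/-- The discretized operator `A_{n,m} = Q_m A P_n`. -/
noncomputable def Amn {X Y : Type*} [NormedAddCommGroup X] [InnerProductSpace ℝ X]
    [NormedAddCommGroup Y] [InnerProductSpace ℝ Y]
    (A : X →L[ℝ] Y) (Xn : Submodule ℝ X) (Ym : Submodule ℝ Y)
    [Xn.HasOrthogonalProjection] [Ym.HasOrthogonalProjection] : X →L[ℝ] Y :=
  (proj Ym).comp (A.comp (proj Xn))

/-- `B` is the Moore–Penrose pseudoinverse of `A` (the four Penrose conditions). -/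
def IsPseudoinverse {X Y : Type*} [NormedAddCommGroup X] [InnerProductSpace ℝ X]
    [CompleteSpace X] [NormedAddCommGroup Y] [InnerProductSpace ℝ Y] [CompleteSpace Y]
    (A : X →L[ℝ] Y) (B : Y →L[ℝ] X) : Prop :=
  A.comp (B.comp A) = A ∧ B.comp (A.comp B) = B ∧
  ContinuousLinearMap.adjoint (A.comp B) = A.comp B ∧
  ContinuousLinearMap.adjoint (B.comp A) = B.comp A

section Aux

open RealInnerProductSpace

variable {E : Type*} [NormedAddCommGroup E] [InnerProductSpace ℝ E]

lemma proj_mem' (K : Submodule ℝ E) [K.HasOrthogonalProjection] (v : E) :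
    _root_.proj K v ∈ K := by
  simp [_root_.proj]

lemma proj_eq_self' (K : Submodule ℝ E) [K.HasOrthogonalProjection] {v : E} (hv : v ∈ K) :
    _root_.proj K v = v := by
  simp only [_root_.proj, ContinuousLinearMap.comp_apply]
  exact K.starProjection_eq_self_iff.mpr hv

lemma proj_adjoint' [CompleteSpace E] (K : Submodule ℝ E) [K.HasOrthogonalProjection]
    [CompleteSpace K] : ContinuousLinearMap.adjoint (_root_.proj K) = _root_.proj K :=
  (isSelfAdjoint_starProjection K).adjoint_eq

/-- A self-adjoint idempotent operator has norm at most 1. -/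
lemma norm_le_one_of_selfadjoint_idem [CompleteSpace E] (p : E →L[ℝ] E)
    (hsa : ContinuousLinearMap.adjoint p = p) (hidem : ∀ z, p (p z) = p z) :
    ‖p‖ ≤ 1 := by
  refine ContinuousLinearMap.opNorm_le_bound _ zero_le_one (fun z => ?_)
  rw [one_mul]
  set w : E := p z with hw
  have hinner : ⟪w, w⟫ = ⟪z, w⟫ := by
    calc ⟪w, w⟫ = ⟪z, ContinuousLinearMap.adjoint p w⟫ := by
          rw [ContinuousLinearMap.adjoint_inner_right]
      _ = ⟪z, p w⟫ := by rw [hsa]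
      _ = ⟪z, w⟫ := by rw [hw, hidem z]
  have hsq : ‖w‖ * ‖w‖ ≤ ‖z‖ * ‖w‖ := by
    rw [← real_inner_self_eq_norm_mul_norm, hinner]
    exact real_inner_le_norm _ _
  rcases (norm_nonneg w).eq_or_lt with h | h
  · rw [← h]; exact norm_nonneg z
  · exact le_of_mul_le_mul_right hsq h

end Aux

set_option maxHeartbeats 1000000 in
/-- if `‖(I − P_n) A* Q_m‖ ‖A_{n,m}†‖ ≤ C` uniformly, then
`‖(I − P_n) A* Q_m A P_n x‖ ≤ C' ‖P_n A* Q_m A P_n x‖` uniformly, and consequently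
`sup_{n,m} ‖A_{n,m}† A‖ < ∞`. -/
theorem stmt_16 {X Y : Type*} [NormedAddCommGroup X] [InnerProductSpace ℝ X] [CompleteSpace X]
    [NormedAddCommGroup Y] [InnerProductSpace ℝ Y] [CompleteSpace Y]
    (A : X →L[ℝ] Y) (Xn : ℕ → Submodule ℝ X) (Ym : ℕ → Submodule ℝ Y)
    [∀ n, FiniteDimensional ℝ (Xn n)] [∀ m, FiniteDimensional ℝ (Ym m)]
    (hX : Monotone Xn) (hY : Monotone Ym)
    (hdX : Dense (↑(⨆ n, Xn n) : Set X)) (hdY : Dense (↑(⨆ m, Ym m) : Set Y))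
    (Adag : ℕ → ℕ → (Y →L[ℝ] X))
    (hdag : ∀ n m, IsPseudoinverse (Amn A (Xn n) (Ym m)) (Adag n m))
    (C : ℝ)
    (hC : ∀ n m : ℕ,
      ‖((ContinuousLinearMap.id ℝ X - proj (Xn n)).comp
          ((ContinuousLinearMap.adjoint A).comp (proj (Ym m))))‖ * ‖Adag n m‖ ≤ C) :
    (∃ C' : ℝ, ∀ (n m : ℕ) (x : X),
      ‖(ContinuousLinearMap.id ℝ X - proj (Xn n))
          (ContinuousLinearMap.adjoint A (Amn A (Xn n) (Ym m) x))‖ ≤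
        C' * ‖proj (Xn n) (ContinuousLinearMap.adjoint A (Amn A (Xn n) (Ym m) x))‖) ∧
    (∃ C'' : ℝ, ∀ n m : ℕ, ‖(Adag n m).comp A‖ ≤ C'') := by
  have key : ∀ n m : ℕ,
      (∀ x : X,
        ‖(ContinuousLinearMap.id ℝ X - _root_.proj (Xn n))
            (ContinuousLinearMap.adjoint A (Amn A (Xn n) (Ym m) x))‖ ≤
          C * ‖_root_.proj (Xn n) (ContinuousLinearMap.adjoint A (Amn A (Xn n) (Ym m) x))‖) ∧
      ‖(Adag n m).comp A‖ ≤ 1 + C := by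
    intro n m
    set P : X →L[ℝ] X := _root_.proj (Xn n) with hP
    set Q : Y →L[ℝ] Y := _root_.proj (Ym m) with hQ
    set T : X →L[ℝ] Y := Amn A (Xn n) (Ym m) with hT
    set B : Y →L[ℝ] X := Adag n m with hB
    set D : Y →L[ℝ] X := (ContinuousLinearMap.id ℝ X - P).comp
      ((ContinuousLinearMap.adjoint A).comp Q) with hD
    obtain ⟨h1, h2, h3, h4⟩ := hdag n m
    rw [← hT, ← hB] at h1 h2 h3 h4
    have hCd : ‖D‖ * ‖B‖ ≤ C := hC n m
    have hPadj : ContinuousLinearMap.adjoint P = P := proj_adjoint' (Xn n)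
    have hQadj : ContinuousLinearMap.adjoint Q = Q := proj_adjoint' (Ym m)
    have hQT : ∀ x : X, Q (T x) = T x := by
      intro x
      exact proj_eq_self' (Ym m) (proj_mem' (Ym m) _)
    have hTadj : ContinuousLinearMap.adjoint T =
        P.comp ((ContinuousLinearMap.adjoint A).comp Q) := by
      rw [hT, Amn, adjoint_comp, adjoint_comp, ← hP, ← hQ, hPadj, hQadj, comp_assoc]
    have hb : ∀ z : Y, B ((T.comp B) z) = B z := by
      intro z
      have := congrArg (fun f : Y →L[ℝ] X => f z) h2
      simpa using this
    have ht : ∀ z : X, T ((B.comp T) z) = T z := by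
      intro z
      have := congrArg (fun f : X →L[ℝ] Y => f z) h1
      simpa using this
    -- lower bound:  ‖T x‖ ≤ ‖B‖ * ‖T* (T x)‖
    have hlow : ∀ x : X, ‖T x‖ ≤ ‖B‖ * ‖ContinuousLinearMap.adjoint T (T x)‖ := by
      intro x
      have e1 : T x = (ContinuousLinearMap.adjoint B)
          (ContinuousLinearMap.adjoint T (T x)) := by
        calc T x = (T.comp B) (T x) := by
              simpa [ContinuousLinearMap.comp_apply] using (ht x).symm
          _ = (ContinuousLinearMap.adjoint (T.comp B)) (T x) := by rw [h3]
          _ = (ContinuousLinearMap.adjoint B)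
              (ContinuousLinearMap.adjoint T (T x)) := by rw [adjoint_comp]; rfl
      calc ‖T x‖ = ‖(ContinuousLinearMap.adjoint B)
            (ContinuousLinearMap.adjoint T (T x))‖ := by rw [← e1]
        _ ≤ ‖ContinuousLinearMap.adjoint B‖ * ‖ContinuousLinearMap.adjoint T (T x)‖ :=
          le_opNorm _ _
        _ = ‖B‖ * ‖ContinuousLinearMap.adjoint T (T x)‖ := by
          rw [ContinuousLinearMap.adjoint.norm_map]
    constructor
    · -- part 1
      intro x
      have e2 : (ContinuousLinearMap.id ℝ X - P)
          (ContinuousLinearMap.adjoint A (T x)) = D (T x) := by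
        simp [hD, ContinuousLinearMap.comp_apply, hQT x]
      have e3 : P (ContinuousLinearMap.adjoint A (T x)) =
          ContinuousLinearMap.adjoint T (T x) := by
        rw [hTadj]
        simp [ContinuousLinearMap.comp_apply, hQT x]
      rw [e2, e3]
      calc ‖D (T x)‖ ≤ ‖D‖ * ‖T x‖ := le_opNorm _ _
        _ ≤ ‖D‖ * (‖B‖ * ‖ContinuousLinearMap.adjoint T (T x)‖) :=
          mul_le_mul_of_nonneg_left (hlow x) (norm_nonneg _)
        _ = (‖D‖ * ‖B‖) * ‖ContinuousLinearMap.adjoint T (T x)‖ := by ring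
        _ ≤ C * ‖ContinuousLinearMap.adjoint T (T x)‖ :=
          mul_le_mul_of_nonneg_right hCd (norm_nonneg _)
    · -- part 2
      have hIQTB : (ContinuousLinearMap.id ℝ Y - Q).comp (T.comp B) = 0 := by
        ext y
        simp [ContinuousLinearMap.comp_apply, ContinuousLinearMap.sub_apply, hQT]
      have hTBIQ : (T.comp B).comp (ContinuousLinearMap.id ℝ Y - Q) = 0 := by
        have := congrArg ContinuousLinearMap.adjoint hIQTB
        rwa [adjoint_comp, h3, map_sub, adjoint_id, hQadj, map_zero] at this
      have hBQ : ∀ y : Y, B (Q y) = B y := by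
        intro y
        have h5 : T (B y) - T (B (Q y)) = 0 := by
          have := congrArg (fun f : Y →L[ℝ] Y => f y) hTBIQ
          simpa [ContinuousLinearMap.comp_apply, ContinuousLinearMap.sub_apply, map_sub]
            using this
        have h6 : T (B (Q y)) = T (B y) := (sub_eq_zero.mp h5).symm
        calc B (Q y) = B ((T.comp B) (Q y)) := (hb (Q y)).symm
          _ = B (T (B (Q y))) := rfl
          _ = B (T (B y)) := by rw [h6]
          _ = B ((T.comp B) y) := rfl
          _ = B y := hb y
      have hsplit : B.comp A = (B.comp T) +
          B.comp (Q.comp (A.comp (ContinuousLinearMap.id ℝ X - P))) := by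
        ext x
        simp only [ContinuousLinearMap.comp_apply, ContinuousLinearMap.add_apply,
          ContinuousLinearMap.sub_apply, ContinuousLinearMap.id_apply, hT, Amn, ← hP, ← hQ,
          hBQ, map_sub]
        abel
      have hBTnorm : ‖B.comp T‖ ≤ 1 := by
        refine norm_le_one_of_selfadjoint_idem _ h4 (fun z => ?_)
        calc (B.comp T) ((B.comp T) z) = B (T ((B.comp T) z)) := rfl
          _ = B (T z) := by rw [ht z]
          _ = (B.comp T) z := rfl
      have hSnorm : ‖B.comp (Q.comp (A.comp (ContinuousLinearMap.id ℝ X - P)))‖ ≤ C := by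
        have hadj : ContinuousLinearMap.adjoint
            (B.comp (Q.comp (A.comp (ContinuousLinearMap.id ℝ X - P)))) =
            D.comp (ContinuousLinearMap.adjoint B) := by
          rw [adjoint_comp, adjoint_comp, adjoint_comp, hQadj, map_sub, adjoint_id, hPadj,
            comp_assoc, hD]
          simp only [comp_assoc]
        calc ‖B.comp (Q.comp (A.comp (ContinuousLinearMap.id ℝ X - P)))‖
            = ‖ContinuousLinearMap.adjoint
                (B.comp (Q.comp (A.comp (ContinuousLinearMap.id ℝ X - P))))‖ :=
              (ContinuousLinearMap.adjoint.norm_map _).symm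
          _ = ‖D.comp (ContinuousLinearMap.adjoint B)‖ := by rw [hadj]
          _ ≤ ‖D‖ * ‖ContinuousLinearMap.adjoint B‖ := opNorm_comp_le _ _
          _ = ‖D‖ * ‖B‖ := by rw [ContinuousLinearMap.adjoint.norm_map]
          _ ≤ C := hCd
      rw [hsplit]
      exact (norm_add_le _ _).trans (add_le_add hBTnorm hSnorm)
  exact ⟨⟨C, fun n m x => (key n m).1 x⟩, ⟨1 + C, fun n m => (key n m).2⟩⟩
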